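/- Let φ : A → B be a homomorphism of k-algebras and suppose the coradical of B^o is cocommutative. Then the induced coalgebra map φ* : B^o → A^o maps corad(B^o) into corad(A^o). -/

import Mathlib

variable (k : Type*) [Field k]

/-- `f ∈ A^o` : the kernel of `f` contains a two-sided ideal of finite codimension. -/
def memFiniteDual (A : Type*) [Ring A] [Algebra k A] (f : Module.Dual k A) : Prop :=
  ∃ I : Submodule k A, (∀ (a : A), ∀ x ∈ I, a * x ∈ I) ∧ (∀ (a : A), ∀ x ∈ I, x * a ∈ I) ∧
    FiniteDimensional k (A ⧸ I) ∧ ∀ x ∈ I, f x = 0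

/-- A subspace `D` of `A*` is a subcoalgebra of `A^o` : it consists of elements of `A^o`
and is closed under the comultiplication dual to the multiplication of `A`. -/
def IsSubcoalgebraOfDual (A : Type*) [Ring A] [Algebra k A]
    (D : Submodule k (Module.Dual k A)) : Prop :=
  (∀ f ∈ D, memFiniteDual k A f) ∧
  ∀ f ∈ D, ∃ (n : ℕ) (g h : Fin n → Module.Dual k A),
    (∀ i, g i ∈ D ∧ h i ∈ D) ∧ ∀ a b : A, f (a * b) = ∑ i, g i a * h i b

/-- The coradical of `A^o` : the sum of all simple subcoalgebras of `A^o`. -/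
def coradicalOfDual (A : Type*) [Ring A] [Algebra k A] : Submodule k (Module.Dual k A) :=
  sSup {D | IsSubcoalgebraOfDual k A D ∧ D ≠ ⊥ ∧
    ∀ D' ≤ D, IsSubcoalgebraOfDual k A D' → D' = ⊥ ∨ D' = D}

/-!
A simple subcoalgebra `D` of `B^o` is finite-dimensional (every element of a subcoalgebra lies in
the finite-dimensional subcoalgebra spanned by its two-sided translates), so annihilators identify
it with a maximal two-sided ideal `J = D^⊥` of finite codimension. Cocommutativity of `D` makes
`B ⧸ J` commutative, hence a field. Then `A ⧸ φ⁻¹(J)` embeds into it, so it is a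
finite-dimensional domain and therefore a field as well: `φ⁻¹(J) = (φ* D)^⊥` is maximal, i.e.
`φ* D` is simple. The coradical of `B^o` is spanned by such `D`.
-/

section

variable {k} {A B : Type*} [Ring A] [Algebra k A] [Ring B] [Algebra k B]

namespace Submodule

def IsTwoSidedIdeal (I : Submodule k A) : Prop :=
  (∀ a, ∀ x ∈ I, a * x ∈ I) ∧ ∀ a, ∀ x ∈ I, x * a ∈ I

def IsMaximalTwoSidedIdeal (I : Submodule k A) : Prop :=
  I.IsTwoSidedIdeal ∧ I ≠ ⊤ ∧ ∀ K : Submodule k A, I ≤ K → K.IsTwoSidedIdeal → K = I ∨ K = ⊤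

theorem IsTwoSidedIdeal.eq_top_of_one_mem {I : Submodule k A} (hI : I.IsTwoSidedIdeal)
    (h1 : (1 : A) ∈ I) : I = ⊤ :=
  eq_top_iff'.mpr fun a => by simpa using hI.1 a 1 h1

theorem IsTwoSidedIdeal.comap {J : Submodule k B} (hJ : J.IsTwoSidedIdeal) (φ : A →ₐ[k] B) :
    (J.comap φ.toLinearMap).IsTwoSidedIdeal := by
  constructor <;> intro a x hx <;> simp only [mem_comap, AlgHom.toLinearMap_apply, map_mul] at hx ⊢
  exacts [hJ.1 (φ a) _ hx, hJ.2 (φ a) _ hx]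

theorem finiteDimensional_quotient_comap (φ : A →ₐ[k] B) (J : Submodule k B)
    [FiniteDimensional k (B ⧸ J)] : FiniteDimensional k (A ⧸ J.comap φ.toLinearMap) := by
  refine Module.Finite.of_injective ((J.comap φ.toLinearMap).mapQ J φ.toLinearMap le_rfl) ?_
  rw [← LinearMap.ker_eq_bot, ker_mapQ, mkQ_map_self]

/-- Right multiplication by `x` is injective, hence surjective, on the finite-dimensional
quotient. -/
theorem exists_mul_sub_one_mem_of_finiteDimensional {I : Submodule k A}
    (hI : ∀ a, ∀ x ∈ I, x * a ∈ I) [FiniteDimensional k (A ⧸ I)] {x : A}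
    (hx : ∀ a, a * x ∈ I → a ∈ I) : ∃ y, y * x - 1 ∈ I := by
  have hxI : I ≤ I.comap (LinearMap.mulRight k x) := fun a ha => hI x a ha
  have hT : Function.Injective (I.mapQ I _ hxI) := by
    refine (injective_iff_map_eq_zero _).mpr fun z hz => ?_
    obtain ⟨a, rfl⟩ := Quotient.mk_surjective I z
    rw [mapQ_apply, Quotient.mk_eq_zero] at hz
    exact (Quotient.mk_eq_zero I).mpr (hx a hz)
  obtain ⟨z, hz⟩ := LinearMap.injective_iff_surjective.mp hT (Quotient.mk 1)
  obtain ⟨y, rfl⟩ := Quotient.mk_surjective I z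
  exact ⟨y, (Quotient.eq I).mp hz⟩

theorem IsMaximalTwoSidedIdeal.one_notMem {J : Submodule k B} (hJ : J.IsMaximalTwoSidedIdeal) :
    (1 : B) ∉ J :=
  fun h => hJ.2.1 (hJ.1.eq_top_of_one_mem h)

/-- `J ⊔ B x` is a two-sided ideal because `x` is central modulo `J`. -/
theorem IsMaximalTwoSidedIdeal.exists_mul_sub_one_mem {J : Submodule k B}
    (hJ : J.IsMaximalTwoSidedIdeal) (hcomm : ∀ x y, x * y - y * x ∈ J) {x : B} (hx : x ∉ J) :
    ∃ y, y * x - 1 ∈ J := by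
  set K := J ⊔ LinearMap.range (LinearMap.mulRight k x)
  have hxK : x ∈ K := mem_sup_right ⟨1, one_mul x⟩
  have hK : K.IsTwoSidedIdeal := by
    constructor
    · intro a t ht
      obtain ⟨j, hj, _, ⟨b, rfl⟩, rfl⟩ := mem_sup.mp ht
      rw [mul_add, LinearMap.mulRight_apply, ← mul_assoc]
      exact add_mem (mem_sup_left (hJ.1.1 a j hj)) (mem_sup_right ⟨a * b, rfl⟩)
    · intro a t ht
      obtain ⟨j, hj, _, ⟨b, rfl⟩, rfl⟩ := mem_sup.mp ht
      have h : (j + b * x) * a = (j * a + b * (x * a - a * x)) + b * a * x := by noncomm_ring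
      rw [LinearMap.mulRight_apply, h]
      exact add_mem (mem_sup_left (add_mem (hJ.1.2 a j hj) (hJ.1.1 b _ (hcomm x a))))
        (mem_sup_right ⟨b * a, rfl⟩)
  rcases hJ.2.2 K le_sup_left hK with hKJ | hKtop
  · exact absurd (hKJ ▸ hxK) hx
  · obtain ⟨j, hj, _, ⟨y, rfl⟩, h1⟩ := mem_sup.mp (hKtop ▸ mem_top : (1 : B) ∈ K)
    refine ⟨y, ?_⟩
    rw [show y * x - 1 = -j by rw [← h1]; simp]
    exact neg_mem hj

theorem IsMaximalTwoSidedIdeal.mem_of_mul_mem {J : Submodule k B}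
    (hJ : J.IsMaximalTwoSidedIdeal) (hcomm : ∀ x y, x * y - y * x ∈ J) {a b : B}
    (hab : a * b ∈ J) (hb : b ∉ J) : a ∈ J := by
  obtain ⟨y, hy⟩ := hJ.exists_mul_sub_one_mem hcomm hb
  rw [show a = a * b * y - a * (b * y - y * b) - a * (y * b - 1) by noncomm_ring]
  exact sub_mem (sub_mem (hJ.1.2 y _ hab) (hJ.1.1 a _ (hcomm b y))) (hJ.1.1 a _ hy)

theorem IsMaximalTwoSidedIdeal.comap {J : Submodule k B} (hJ : J.IsMaximalTwoSidedIdeal)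
    (hcomm : ∀ x y, x * y - y * x ∈ J) [FiniteDimensional k (B ⧸ J)] (φ : A →ₐ[k] B) :
    (J.comap φ.toLinearMap).IsMaximalTwoSidedIdeal := by
  have := finiteDimensional_quotient_comap φ J
  refine ⟨hJ.1.comap φ, fun h => hJ.one_notMem ?_,
    fun K hJK hK => or_iff_not_imp_left.mpr fun hne => ?_⟩
  · simpa using (h ▸ mem_top : (1 : A) ∈ J.comap φ.toLinearMap)
  obtain ⟨x, hxK, hx⟩ := SetLike.exists_of_lt (lt_of_le_of_ne hJK (Ne.symm hne))
  obtain ⟨y, hy⟩ := exists_mul_sub_one_mem_of_finiteDimensional (hJ.1.comap φ).2 fun a ha => by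
    simpa using hJ.mem_of_mul_mem hcomm (by simpa using ha) (by simpa using hx)
  refine hK.eq_top_of_one_mem ?_
  simpa using sub_mem (hK.1 y x hxK) (hJK hy)

theorem IsTwoSidedIdeal.dualMap_mulLeftRight_mem_dualAnnihilator
    {I : Submodule k A} (hI : I.IsTwoSidedIdeal) {f : Module.Dual k A}
    (hf : f ∈ I.dualAnnihilator) (p : A × A) :
    (LinearMap.mulLeftRight k p).dualMap f ∈ I.dualAnnihilator := by
  rw [mem_dualAnnihilator] at hf ⊢
  exact fun x hx => hf _ (hI.2 _ _ (hI.1 _ _ hx))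

theorem dualCoannihilator_map_dualMap {R M N : Type*} [CommSemiring R]
    [AddCommMonoid M] [Module R M] [AddCommMonoid N] [Module R N] (f : M →ₗ[R] N)
    (Φ : Submodule R (Module.Dual R N)) :
    (Φ.map f.dualMap).dualCoannihilator = Φ.dualCoannihilator.comap f := by
  ext x
  simp [mem_dualCoannihilator]

end Submodule

theorem Subspace.exists_sum_apply_smul_eq {V : Type*} [AddCommGroup V] [Module k V]
    (W : Subspace k (Module.Dual k V)) [FiniteDimensional k W] :
    ∃ (n : ℕ) (β : Fin n → Module.Dual k V) (v : Fin n → V),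
      (∀ j, β j ∈ W) ∧ ∀ w ∈ W, w = ∑ j, w (v j) • β j := by
  have := Module.Free.of_divisionRing k W
  let b := Module.finBasis k W
  have hev : Function.Surjective W.subtype.flip :=
    (LinearMap.flip_surjective_iff₁ (K := k) (V₁ := W) (V₂ := V) (B := W.subtype)).mpr
      W.subtype_injective
  choose v hv using fun j => hev (b.coord j)
  refine ⟨_, fun j => b j, v, fun j => (b j).2, fun w hw => ?_⟩
  conv_lhs => rw [← show ((⟨w, hw⟩ : W) : Module.Dual k V) = w from rfl, ← b.sum_repr ⟨w, hw⟩]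
  rw [Submodule.coe_sum]
  refine Finset.sum_congr rfl fun j _ => ?_
  rw [Submodule.coe_smul, ← b.coord_apply, ← hv j]
  rfl

namespace IsSubcoalgebraOfDual

variable {D : Submodule k (Module.Dual k A)}

theorem isTwoSidedIdeal_dualCoannihilator (hD : IsSubcoalgebraOfDual k A D) :
    D.dualCoannihilator.IsTwoSidedIdeal := by
  constructor <;> intro a x hx <;> rw [Submodule.mem_dualCoannihilator] at hx ⊢ <;> intro f hf <;>
    obtain ⟨n, g, h, hgh, hfgh⟩ := hD.2 f hf <;> rw [hfgh]
  · exact Finset.sum_eq_zero fun i _ => by rw [hx _ (hgh i).2, mul_zero]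
  · exact Finset.sum_eq_zero fun i _ => by rw [hx _ (hgh i).1, zero_mul]

theorem dualMap_mulLeft_mem (hD : IsSubcoalgebraOfDual k A D) {f : Module.Dual k A}
    (hf : f ∈ D) (a : A) : (LinearMap.mulLeft k a).dualMap f ∈ D := by
  obtain ⟨n, g, h, hgh, hfgh⟩ := hD.2 f hf
  rw [show (LinearMap.mulLeft k a).dualMap f = ∑ i, g i a • h i by ext; simp [hfgh]]
  exact Submodule.sum_mem _ fun i _ => Submodule.smul_mem _ _ (hgh i).2

theorem dualMap_mulRight_mem (hD : IsSubcoalgebraOfDual k A D) {f : Module.Dual k A}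
    (hf : f ∈ D) (b : A) : (LinearMap.mulRight k b).dualMap f ∈ D := by
  obtain ⟨n, g, h, hgh, hfgh⟩ := hD.2 f hf
  rw [show (LinearMap.mulRight k b).dualMap f = ∑ i, h i b • g i by ext; simp [hfgh, mul_comm]]
  exact Submodule.sum_mem _ fun i _ => Submodule.smul_mem _ _ (hgh i).1

theorem dualMap_mulLeftRight_mem (hD : IsSubcoalgebraOfDual k A D) {f : Module.Dual k A}
    (hf : f ∈ D) (p : A × A) : (LinearMap.mulLeftRight k p).dualMap f ∈ D := by
  obtain ⟨a, b⟩ := p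
  rw [show (LinearMap.mulLeftRight k (a, b)).dualMap f =
      (LinearMap.mulLeft k a).dualMap ((LinearMap.mulRight k b).dualMap f) by
    ext; simp [mul_assoc]]
  exact hD.dualMap_mulLeft_mem (hD.dualMap_mulRight_mem hf _) _

end IsSubcoalgebraOfDual

/-- Writing `a ⇀ f` for `b ↦ f (a * b)`, expand `a ⇀ f` in a biorthogonal system `(βⱼ, vⱼ)` of
`W`: `f (a * b) = ∑ⱼ f (a * vⱼ) βⱼ b`, and `a ↦ f (a * vⱼ)` is again in `W`. -/
theorem isSubcoalgebraOfDual_of_le_dualAnnihilator {I : Submodule k A}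
    (hI : I.IsTwoSidedIdeal) [FiniteDimensional k (A ⧸ I)] {W : Submodule k (Module.Dual k A)}
    (hWI : W ≤ I.dualAnnihilator)
    (hW : ∀ f ∈ W, ∀ p, (LinearMap.mulLeftRight k p).dualMap f ∈ W) :
    IsSubcoalgebraOfDual k A W := by
  have : FiniteDimensional k I.dualAnnihilator := Submodule.finite_dualAnnihilator_iff.mpr ‹_›
  have : FiniteDimensional k W := Submodule.finiteDimensional_of_le hWI
  obtain ⟨n, β, v, hβ, hexp⟩ := Subspace.exists_sum_apply_smul_eq W
  refine ⟨fun f hf => ⟨I, hI.1, hI.2, ‹_›, (Submodule.mem_dualAnnihilator f).mp (hWI hf)⟩,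
    fun f hf => ⟨n, fun j => (LinearMap.mulLeftRight k (1, v j)).dualMap f, β,
      fun j => ⟨hW f hf _, hβ j⟩, fun a b => ?_⟩⟩
  simpa using congrArg (fun g => g b) (hexp _ (hW f hf (a, 1)))

theorem IsSubcoalgebraOfDual.exists_finiteDimensional_le {D : Submodule k (Module.Dual k A)}
    (hD : IsSubcoalgebraOfDual k A D) {f : Module.Dual k A} (hf : f ∈ D) :
    ∃ W ≤ D, IsSubcoalgebraOfDual k A W ∧ FiniteDimensional k W ∧ f ∈ W := by
  obtain ⟨I, hIl, hIr, hIfin, hfI⟩ := hD.1 f hf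
  have hI : I.IsTwoSidedIdeal := ⟨hIl, hIr⟩
  replace hfI : f ∈ I.dualAnnihilator := (Submodule.mem_dualAnnihilator f).mpr hfI
  have : FiniteDimensional k I.dualAnnihilator := Submodule.finite_dualAnnihilator_iff.mpr hIfin
  set W := Submodule.span k (Set.range fun p : A × A => (LinearMap.mulLeftRight k p).dualMap f)
  have hWI : W ≤ I.dualAnnihilator := Submodule.span_le.mpr <| Set.range_subset_iff.mpr
    (hI.dualMap_mulLeftRight_mem_dualAnnihilator hfI)
  have hW : ∀ g ∈ W, ∀ p, (LinearMap.mulLeftRight k p).dualMap g ∈ W := by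
    rintro g hg ⟨a, b⟩
    have hmap : W.map (LinearMap.mulLeftRight k (a, b)).dualMap ≤ W := by
      rw [Submodule.map_span, Submodule.span_le]
      rintro _ ⟨_, ⟨⟨c, d⟩, rfl⟩, rfl⟩
      exact Submodule.subset_span ⟨(c * a, b * d), by ext; simp [mul_assoc]⟩
    exact hmap (Submodule.mem_map_of_mem hg)
  refine ⟨W, Submodule.span_le.mpr (Set.range_subset_iff.mpr (hD.dualMap_mulLeftRight_mem hf)),
    isSubcoalgebraOfDual_of_le_dualAnnihilator hI hWI hW, Submodule.finiteDimensional_of_le hWI,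
    Submodule.subset_span ⟨(1, 1), by ext; simp⟩⟩

theorem isSubcoalgebraOfDual_dualAnnihilator {I : Submodule k A} (hI : I.IsTwoSidedIdeal)
    [FiniteDimensional k (A ⧸ I)] : IsSubcoalgebraOfDual k A I.dualAnnihilator :=
  isSubcoalgebraOfDual_of_le_dualAnnihilator hI le_rfl
    fun _ hf => hI.dualMap_mulLeftRight_mem_dualAnnihilator hf

theorem IsSubcoalgebraOfDual.map_dualMap {D : Submodule k (Module.Dual k B)}
    (hD : IsSubcoalgebraOfDual k B D) (φ : A →ₐ[k] B) :
    IsSubcoalgebraOfDual k A (D.map φ.toLinearMap.dualMap) := by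
  constructor
  · rintro _ ⟨g, hg, rfl⟩
    obtain ⟨I, hIl, hIr, hIfin, hgI⟩ := hD.1 g hg
    obtain ⟨hφIl, hφIr⟩ := Submodule.IsTwoSidedIdeal.comap ⟨hIl, hIr⟩ φ
    exact ⟨_, hφIl, hφIr, Submodule.finiteDimensional_quotient_comap φ I, fun x hx => hgI _ hx⟩
  · rintro _ ⟨g, hg, rfl⟩
    obtain ⟨n, u, v, huv, hguv⟩ := hD.2 g hg
    exact ⟨n, fun i => φ.toLinearMap.dualMap (u i), fun i => φ.toLinearMap.dualMap (v i),
      fun i => ⟨Submodule.mem_map_of_mem (huv i).1, Submodule.mem_map_of_mem (huv i).2⟩,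
      fun a b => by simpa using hguv (φ a) (φ b)⟩

variable (A) in
def IsSimpleSubcoalgebraOfDual (D : Submodule k (Module.Dual k A)) : Prop :=
  IsSubcoalgebraOfDual k A D ∧ D ≠ ⊥ ∧
    ∀ D' ≤ D, IsSubcoalgebraOfDual k A D' → D' = ⊥ ∨ D' = D

theorem isSimpleSubcoalgebraOfDual_of_isMaximalTwoSidedIdeal
    {D : Submodule k (Module.Dual k A)} [FiniteDimensional k D] (hD : IsSubcoalgebraOfDual k A D)
    (hmax : D.dualCoannihilator.IsMaximalTwoSidedIdeal) : IsSimpleSubcoalgebraOfDual A D := by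
  refine ⟨hD, fun h => hmax.2.1 (by rw [h, Submodule.dualCoannihilator_bot]),
    fun D' hD'D hD' => ?_⟩
  have : FiniteDimensional k D' := Submodule.finiteDimensional_of_le hD'D
  rw [← Subspace.dualCoannihilator_dualAnnihilator_eq (W := D')]
  rcases hmax.2.2 _ (Submodule.dualCoannihilator_anti hD'D)
    hD'.isTwoSidedIdeal_dualCoannihilator with h | h
  · exact .inr (by rw [h, Subspace.dualCoannihilator_dualAnnihilator_eq])
  · exact .inl (by rw [h, Submodule.dualAnnihilator_top])

namespace IsSimpleSubcoalgebraOfDual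

variable {D : Submodule k (Module.Dual k A)}

theorem finiteDimensional (hD : IsSimpleSubcoalgebraOfDual A D) : FiniteDimensional k D := by
  obtain ⟨f, hfD, hf0⟩ := Submodule.exists_mem_ne_zero_of_ne_bot hD.2.1
  obtain ⟨W, hWD, hW, hWfin, hfW⟩ := hD.1.exists_finiteDimensional_le hfD
  rcases hD.2.2 W hWD hW with rfl | rfl
  · exact absurd ((Submodule.mem_bot k).mp hfW) hf0
  · exact hWfin

theorem isMaximalTwoSidedIdeal_dualCoannihilator (hD : IsSimpleSubcoalgebraOfDual A D) :
    D.dualCoannihilator.IsMaximalTwoSidedIdeal := by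
  have := hD.finiteDimensional
  have : FiniteDimensional k (A ⧸ D.dualCoannihilator) :=
    Subspace.finiteDimensional_quot_dualCoannihilator_iff.mpr this
  refine ⟨hD.1.isTwoSidedIdeal_dualCoannihilator, fun h => hD.2.1 ?_, fun K hK hKideal => ?_⟩
  · rw [← Subspace.dualCoannihilator_dualAnnihilator_eq (W := D), h,
      Submodule.dualAnnihilator_top]
  have : FiniteDimensional k (A ⧸ K) :=
    Module.Finite.of_surjective _ (Submodule.factor_surjective hK)
  have hKD : K.dualAnnihilator ≤ D := by
    simpa [Subspace.dualCoannihilator_dualAnnihilator_eq] using Submodule.dualAnnihilator_anti hK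
  rw [← Subspace.dualAnnihilator_dualCoannihilator_eq (W := K)]
  rcases hD.2.2 _ hKD (isSubcoalgebraOfDual_dualAnnihilator hKideal) with h | h
  · exact .inr (by rw [h, Submodule.dualCoannihilator_bot])
  · exact .inl (by rw [h])

theorem map_dualMap {D : Submodule k (Module.Dual k B)} (hD : IsSimpleSubcoalgebraOfDual B D)
    (hcomm : ∀ g ∈ D, ∀ x y, g (x * y) = g (y * x)) (φ : A →ₐ[k] B) :
    IsSimpleSubcoalgebraOfDual A (D.map φ.toLinearMap.dualMap) := by
  have := hD.finiteDimensional
  have : FiniteDimensional k (B ⧸ D.dualCoannihilator) :=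
    Subspace.finiteDimensional_quot_dualCoannihilator_iff.mpr this
  refine isSimpleSubcoalgebraOfDual_of_isMaximalTwoSidedIdeal (hD.1.map_dualMap φ) ?_
  rw [Submodule.dualCoannihilator_map_dualMap]
  refine hD.isMaximalTwoSidedIdeal_dualCoannihilator.comap (fun x y => ?_) φ
  rw [Submodule.mem_dualCoannihilator]
  intro g hg
  rw [map_sub, hcomm g hg, sub_self]

end IsSimpleSubcoalgebraOfDual

end

/-- If `φ : A → B` is a `k`-algebra homomorphism and the coradical of `B^o` is
cocommutative (i.e. `g(xy) = g(yx)` for every `g` in it), then the induced coalgebra map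
`φ* : B^o → A^o` maps `corad(B^o)` into `corad(A^o)`. -/
theorem dual_map_maps_cocommutative_coradical_into_coradical
    (A B : Type*) [Ring A] [Algebra k A] [Ring B] [Algebra k B] (φ : A →ₐ[k] B)
    (hcocomm : ∀ g ∈ coradicalOfDual k B, ∀ x y : B, g (x * y) = g (y * x)) :
    ∀ g ∈ coradicalOfDual k B, (g ∘ₗ φ.toLinearMap) ∈ coradicalOfDual k A := by
  have hcorad : coradicalOfDual k B ≤ (coradicalOfDual k A).comap φ.toLinearMap.dualMap :=
    sSup_le fun D hD => Submodule.map_le_iff_le_comap.mp <| le_sSup <|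
      IsSimpleSubcoalgebraOfDual.map_dualMap hD (fun g hg => hcocomm g (le_sSup hD hg)) φ
  exact fun g hg => hcorad hg
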